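/- Each of the d coordinate hyperplanes {x : x_i = 0} defines a facet of the grlex polytope P. -/

import Mathlib

open Set Finset

/-- A polytope: convex hull of finitely many points. -/
def IsPolytope {n : ℕ} (X : Set (Fin n → ℝ)) : Prop :=
  ∃ V : Finset (Fin n → ℝ), X = convexHull ℝ (V : Set (Fin n → ℝ))

/-- Affine dimension of a set. -/
noncomputable def adim {n : ℕ} (S : Set (Fin n → ℝ)) : ℕ :=
  Module.finrank ℝ (vectorSpan ℝ S)

/-- `F` is a facet of `X`: an exposed face of affine dimension one less than `X`. -/
def IsFacet {n : ℕ} (X F : Set (Fin n → ℝ)) : Prop :=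
  IsExposed ℝ X F ∧ adim F + 1 = adim X

/-- Two vertices of `X` are adjacent if the segment joining them is an exposed face. -/
def AdjVert {n : ℕ} (X : Set (Fin n → ℝ)) (u v : Fin n → ℝ) : Prop :=
  u ≠ v ∧ u ∈ X.extremePoints ℝ ∧ v ∈ X.extremePoints ℝ ∧
    IsExposed ℝ X (segment ℝ u v)

/-- The convex cone generated by a set: all nonnegative multiples of convex combinations. -/
def coneHull {n : ℕ} (S : Set (Fin n → ℝ)) : Set (Fin n → ℝ) :=
  {0} ∪ {p | ∃ c : ℝ, 0 ≤ c ∧ ∃ z ∈ convexHull ℝ S, p = c • z}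

/-- The tangent cone of `X` at a vertex `v`:
`v + cone{x - v : x an adjacent vertex of v}`. -/
def tangentCone {n : ℕ} (X : Set (Fin n → ℝ)) (v : Fin n → ℝ) : Set (Fin n → ℝ) :=
  {p | ∃ y ∈ coneHull {z | ∃ x, AdjVert X v x ∧ z = x - v}, p = v + y}

/-- The graph (1-skeleton) of a polytope `X`, with the vertices of `X` as nodes. -/
def polyGraph {n : ℕ} (X : Set (Fin n → ℝ)) : SimpleGraph (Fin n → ℝ) where
  Adj := AdjVert X
  symm := by
    refine ⟨?_⟩
    intro u v h
    refine ⟨h.1.symm, h.2.2.1, h.2.1, ?_⟩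
    rw [segment_symm]; exact h.2.2.2
  loopless := by refine ⟨?_⟩; intro u h; exact h.1 rfl

/-- Real point corresponding to an integer point. -/
def toR {d : ℕ} (x : Fin d → ℤ) : Fin d → ℝ := fun i => (x i : ℝ)

/-- Lexicographic order comparing from the last coordinate. -/
def lexLe {d : ℕ} (x y : Fin d → ℤ) : Prop :=
  x = y ∨ ∃ i : Fin d, x i < y i ∧ ∀ k : Fin d, i < k → x k = y k

/-- Graded lexicographic order. -/
def grlexLe {d : ℕ} (x y : Fin d → ℤ) : Prop :=
  (∑ i, x i) < (∑ i, y i) ∨ ((∑ i, x i) = (∑ i, y i) ∧ lexLe x y)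

/-- Graded reverse lexicographic order. -/
def grevlexLe {d : ℕ} (x y : Fin d → ℤ) : Prop :=
  (∑ i, x i) < (∑ i, y i) ∨ ((∑ i, x i) = (∑ i, y i) ∧ lexLe y x)

/-- The grlex polytope `P = conv{x ∈ ℤᵈ : 0 ≤ x ≼_grlex θ}`. -/
def grlexP (d : ℕ) (θ : Fin d → ℤ) : Set (Fin d → ℝ) :=
  convexHull ℝ {p | ∃ x : Fin d → ℤ, (∀ i, 0 ≤ x i) ∧ grlexLe x θ ∧ p = toR x}

/-- The grevlex polytope `Q = conv{x ∈ ℤᵈ : 0 ≤ x ≼_grevlex θ}`. -/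
def grevlexQ (d : ℕ) (θ : Fin d → ℤ) : Set (Fin d → ℝ) :=
  convexHull ℝ {p | ∃ x : Fin d → ℤ, (∀ i, 0 ≤ x i) ∧ grevlexLe x θ ∧ p = toR x}

/-- `b`, the total sum of `θ`. -/
def bsum {d : ℕ} (θ : Fin d → ℤ) : ℤ := ∑ i, θ i

/-- `b̃ₖ`, the sum of the first `k` coordinates of `θ` (`k` is 1-indexed). -/
def btil {d : ℕ} (θ : Fin d → ℤ) (k : ℕ) : ℤ :=
  ∑ i ∈ Finset.univ.filter (fun i : Fin d => (i : ℕ) < k), θ i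

/-- The vertex `w = (b-1)e_d` of `P`. -/
def wP (d : ℕ) (θ : Fin d → ℤ) : Fin d → ℤ :=
  fun i => if (i : ℕ) = d - 1 then bsum θ - 1 else 0

/-- The vertex `u^k = ((b̃_{k-1}+1)e_{k-1}, θ_k - 1, θ_{k+1}, …, θ_d)` of `P` (paper's
1-indexing: coordinate `j` of the paper is index `j-1` here). -/
def uP (d : ℕ) (θ : Fin d → ℤ) (k : ℕ) : Fin d → ℤ :=
  fun i => if (i : ℕ) = k - 2 then btil θ (k - 1) + 1
    else if (i : ℕ) = k - 1 then θ i - 1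
    else if k ≤ (i : ℕ) then θ i else 0

/-- The vertex `v^{j,k} = (b̃_k e_j, 0, …, 0, θ_{k+1}, …, θ_d)` of `P` (1-indexed). -/
def vP (d : ℕ) (θ : Fin d → ℤ) (j k : ℕ) : Fin d → ℤ :=
  fun i => if (i : ℕ) = j - 1 then btil θ k
    else if k ≤ (i : ℕ) then θ i else 0

/-- The point `b·e_j` (1-indexed `j`). -/
def beP (d : ℕ) (θ : Fin d → ℤ) (j : ℕ) : Fin d → ℤ :=
  fun i => if (i : ℕ) = j - 1 then bsum θ else 0

/-- The vertex `u^k = (b̃_{k-1}e_{k-1}, θ_k, …, θ_d)` of `Q` (1-indexed, `2 ≤ k ≤ d+1`). -/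
def uQ (d : ℕ) (θ : Fin d → ℤ) (k : ℕ) : Fin d → ℤ :=
  fun i => if (i : ℕ) = k - 2 then btil θ (k - 1)
    else if k - 1 ≤ (i : ℕ) then θ i else 0

/-- The vertex `v^{j,k} = ((b̃_{k-1}-1)e_j, 0, …, 0, θ_k + 1, θ_{k+1}, …, θ_d)` of `Q`. -/
def vQ (d : ℕ) (θ : Fin d → ℤ) (j k : ℕ) : Fin d → ℤ :=
  fun i => if (i : ℕ) = j - 1 then btil θ (k - 1) - 1
    else if (i : ℕ) = k - 1 then θ i + 1
    else if k ≤ (i : ℕ) then θ i else 0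

/-- Edge boundary of a vertex set in a graph. -/
def eboundary {V : Type*} (G : SimpleGraph V) (S : Set V) : Set (V × V) :=
  {p | G.Adj p.1 p.2 ∧ p.1 ∈ S ∧ p.2 ∉ S}

/-! The polytope lies in the nonnegative orthant, so minimising the `i`-th coordinate over it
exposes `P ∩ {x | x i = 0}`. Since `∑ θ ≥ d ≥ 3`, the lattice points `0` and `e_j` have
coordinate sum below that of `θ` and hence lie in `P`: they make `P` full-dimensional, and
`0` together with the `e_j`, `j ≠ i`, span the hyperplane `x i = 0` inside the face. -/

section CoordinateHyperplane

variable {n : ℕ}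

theorem isExposed_inter_coord_eq_zero {X : Set (Fin n → ℝ)} {i : Fin n}
    (hX : ∀ x ∈ X, 0 ≤ x i) : IsExposed ℝ X (X ∩ {x | x i = 0}) := by
  rintro ⟨z, hzX, hzi⟩
  refine ⟨-ContinuousLinearMap.proj i, Set.ext fun x => ?_⟩
  simp only [Set.mem_inter_iff, Set.mem_ofPred_eq, neg_apply,
    ContinuousLinearMap.proj_apply, neg_le_neg_iff]
  constructor
  · rintro ⟨hx, hxi⟩
    exact ⟨hx, fun y hy => hxi ▸ hX y hy⟩
  · rintro ⟨hx, hmin⟩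
    exact ⟨hx, le_antisymm (hzi ▸ hmin z hzX) (hX x hx)⟩

theorem vectorSpan_eq_span_of_zero_mem {S : Set (Fin n → ℝ)} (h0 : (0 : Fin n → ℝ) ∈ S) :
    vectorSpan ℝ S = Submodule.span ℝ S := by
  rw [vectorSpan_eq_span_vsub_set_right ℝ h0]
  congr 1
  ext x
  simp

theorem span_eq_top_of_single_mem {S : Set (Fin n → ℝ)} (hS : ∀ j, Pi.single j 1 ∈ S) :
    Submodule.span ℝ S = ⊤ := by
  rw [eq_top_iff, ← (Pi.basisFun ℝ (Fin n)).span_eq]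
  exact Submodule.span_mono <| Set.range_subset_iff.2 fun j => by simpa using hS j

theorem span_eq_ker_proj_of_single_mem {S : Set (Fin n → ℝ)} {i : Fin n}
    (hS : ∀ x ∈ S, x i = 0) (hsingle : ∀ j ≠ i, Pi.single j 1 ∈ S) :
    Submodule.span ℝ S = LinearMap.ker (LinearMap.proj i) := by
  refine le_antisymm (Submodule.span_le.2 hS) fun x hx => ?_
  have hx' : x ∈ Submodule.span ℝ (Pi.basisFun ℝ (Fin n) '' {j | j ≠ i}) := by
    rw [Module.Basis.mem_span_image]
    rintro j hj rfl
    exact Finsupp.mem_support_iff.1 hj (by simpa using hx)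
  refine Submodule.span_mono ?_ hx'
  rintro _ ⟨j, hj, rfl⟩
  simpa using hsingle j hj

theorem adim_eq_of_single_mem {S : Set (Fin n → ℝ)} (h0 : (0 : Fin n → ℝ) ∈ S)
    (hS : ∀ j, Pi.single j 1 ∈ S) : adim S = n := by
  rw [adim, vectorSpan_eq_span_of_zero_mem h0, span_eq_top_of_single_mem hS, finrank_top,
    Module.finrank_fin_fun]

theorem adim_add_one_of_single_mem {S : Set (Fin n → ℝ)} {i : Fin n} (h0 : (0 : Fin n → ℝ) ∈ S)
    (hS : ∀ x ∈ S, x i = 0) (hsingle : ∀ j ≠ i, Pi.single j 1 ∈ S) : adim S + 1 = n := by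
  have hproj : (LinearMap.proj i : Module.Dual ℝ (Fin n → ℝ)) ≠ 0 :=
    fun h => by simpa using LinearMap.congr_fun h (Pi.single i 1)
  rw [adim, vectorSpan_eq_span_of_zero_mem h0, span_eq_ker_proj_of_single_mem hS hsingle,
    Module.Dual.finrank_ker_add_one_of_ne_zero hproj, Module.finrank_fin_fun]

end CoordinateHyperplane

section GrlexPolytope

variable {d : ℕ} {θ : Fin d → ℤ}

theorem card_le_sum_of_one_le (hθ : ∀ i, 1 ≤ θ i) : (d : ℤ) ≤ ∑ i, θ i := by
  simpa using Finset.card_nsmul_le_sum Finset.univ θ 1 fun i _ => hθ i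

theorem toR_mem_grlexP {x : Fin d → ℤ} (hx : ∀ i, 0 ≤ x i) (hsum : ∑ i, x i < ∑ i, θ i) :
    toR x ∈ grlexP d θ :=
  subset_convexHull ℝ _ ⟨x, hx, Or.inl hsum, rfl⟩

theorem grlexP_subset_nonneg : grlexP d θ ⊆ Set.Ici 0 :=
  convexHull_min (by rintro _ ⟨x, hx, -, rfl⟩ i; exact Int.cast_nonneg (hx i)) (convex_Ici 0)

theorem zero_mem_grlexP (hθ : 0 < ∑ i, θ i) : (0 : Fin d → ℝ) ∈ grlexP d θ := by
  have h := toR_mem_grlexP (x := 0) (fun _ => le_rfl) (by simpa using hθ)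
  rwa [show toR (0 : Fin d → ℤ) = 0 from funext fun _ => Int.cast_zero] at h

theorem single_mem_grlexP (hθ : 1 < ∑ i, θ i) (j : Fin d) :
    (Pi.single j 1 : Fin d → ℝ) ∈ grlexP d θ := by
  have hj : (0 : Fin d → ℤ) ≤ Pi.single j 1 := Pi.single_nonneg.2 zero_le_one
  have h := toR_mem_grlexP hj (by simpa using hθ)
  have hcast : toR (Pi.single j (1 : ℤ)) = Pi.single j 1 := funext fun i => by
    simp [toR, Pi.apply_single (fun _ => ((↑) : ℤ → ℝ)) fun _ => Int.cast_zero]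
  rwa [hcast] at h

end GrlexPolytope

/-- Each of the `d` coordinate hyperplanes `{x : x_i = 0}` defines a facet of
the grlex polytope `P`. -/
theorem grlexP_coordinate_facets (d : ℕ) (hd : 3 ≤ d) (θ : Fin d → ℤ)
    (hθ : ∀ i, 1 ≤ θ i) (i : Fin d) :
    IsFacet (grlexP d θ) (grlexP d θ ∩ {x | x i = 0}) := by
  have hsum : 1 < ∑ j, θ j := by have := card_le_sum_of_one_le hθ; omega
  have h0 := zero_mem_grlexP (one_pos.trans hsum)
  have hsingle := single_mem_grlexP hsum
  refine ⟨isExposed_inter_coord_eq_zero fun x hx => grlexP_subset_nonneg hx i, ?_⟩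
  rw [adim_eq_of_single_mem h0 hsingle]
  exact adim_add_one_of_single_mem ⟨h0, rfl⟩ (fun x hx => hx.2)
    fun j hj => ⟨hsingle j, Pi.single_eq_of_ne hj.symm _⟩
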